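/- Let 𝕜 be ℝ or ℂ and let A, B, A′, B′ be n×n positive definite Hermitian matrices over 𝕜. Then the characteristic polynomial of √(B⁻¹)·A·√(B⁻¹) equals the characteristic polynomial of √(B′⁻¹)·A′·√(B′⁻¹) if and only if there exists an invertible n×n matrix g over 𝕜 such that g·A·gᴴ = A′ and g·B·gᴴ = B′. In other words, the relative eigenvalues of A with respect to B form a maximal invariant for the simultaneous congruence action on pairs of positive definite matrices. -/

import Mathlib

open scoped Matrix ComplexOrder

/-- The square root of a positive semidefinite matrix, as defined in Mathlib (Dec 2024),
since removed from Mathlib. -/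
noncomputable def Matrix.PosSemidef.sqrt {n 𝕜 : Type*} [Fintype n] [RCLike 𝕜] [DecidableEq n]
    {A : Matrix n n 𝕜} (hA : A.PosSemidef) : Matrix n n 𝕜 :=
  hA.1.eigenvectorUnitary.1 * Matrix.diagonal ((↑) ∘ (√·) ∘ hA.1.eigenvalues) *
  (star hA.1.eigenvectorUnitary : Matrix n n 𝕜)

/-!
Whitening by `S = √(B⁻¹)`, which satisfies `S B S = 1`, turns a congruence `g` carrying `(A, B)`
to `(A', B')` into the unitary `S' g S⁻¹` carrying `S A S` to `S' A' S'`, and back. Hermitian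
matrices are unitarily conjugate iff they have the same sorted eigenvalues, i.e. the same
characteristic polynomial.
-/

namespace Matrix

section CommRing
variable {n R : Type*} [Fintype n] [DecidableEq n] [CommRing R]

lemma mul_mul_eq_one_of_mul_self_eq_inv {S B : Matrix n n R} (hB : IsUnit B.det)
    (h : S * S = B⁻¹) : S * B * S = 1 :=
  calc S * B * S = B * (S * S) * (S * B * S) := by rw [h, mul_nonsing_inv B hB, one_mul]
    _ = B * S * (S * S * B) * S := by simp only [mul_assoc]
    _ = 1 := by rw [h, nonsing_inv_mul B hB, mul_one, mul_assoc, h, mul_nonsing_inv B hB]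

variable [StarRing R]

lemma exists_inv_of_mul_mul_conjTranspose_eq_one {W B : Matrix n n R} (h : W * B * Wᴴ = 1) :
    ∃ V : Matrix n n R, W * V = 1 ∧ V * W = 1 ∧ B = V * Vᴴ := by
  have hWV : W * (B * Wᴴ) = 1 := by rw [← mul_assoc, h]
  have hVW : B * Wᴴ * W = 1 := mul_eq_one_comm.mp hWV
  refine ⟨B * Wᴴ, hWV, hVW, ?_⟩
  calc B = B * Wᴴ * W * B * (B * Wᴴ * W)ᴴ := by rw [hVW, conjTranspose_one, one_mul, mul_one]
    _ = B * Wᴴ * (W * B * Wᴴ) * (B * Wᴴ)ᴴ := by simp only [conjTranspose_mul, mul_assoc]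
    _ = B * Wᴴ * (B * Wᴴ)ᴴ := by rw [h, mul_one]

theorem exists_congr_iff_exists_unitary_conj {A B A' B' W W' : Matrix n n R}
    (hW : W * B * Wᴴ = 1) (hW' : W' * B' * W'ᴴ = 1) :
    (∃ g : Matrix n n R, IsUnit g.det ∧ g * A * gᴴ = A' ∧ g * B * gᴴ = B') ↔
      ∃ U ∈ unitary (Matrix n n R), U * (W * A * Wᴴ) * star U = W' * A' * W'ᴴ := by
  obtain ⟨V, hWV, hVW, hB⟩ := exists_inv_of_mul_mul_conjTranspose_eq_one hW
  obtain ⟨V', -, hVW', hB'⟩ := exists_inv_of_mul_mul_conjTranspose_eq_one hW'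
  have hVWH : Wᴴ * Vᴴ = 1 := by rw [← conjTranspose_mul, hVW, conjTranspose_one]
  constructor
  · rintro ⟨g, -, rfl, rfl⟩
    refine ⟨W' * g * V, ?_, ?_⟩
    · rw [mem_unitaryGroup_iff, star_eq_conjTranspose]
      calc W' * g * V * (W' * g * V)ᴴ = W' * (g * (V * Vᴴ) * gᴴ) * W'ᴴ := by
            simp only [conjTranspose_mul, mul_assoc]
        _ = 1 := by rw [← hB]; simpa only [mul_assoc] using hW'
    · calc W' * g * V * (W * A * Wᴴ) * star (W' * g * V)
            = W' * g * (V * W) * A * (Wᴴ * Vᴴ) * gᴴ * W'ᴴ := by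
              simp only [star_eq_conjTranspose, conjTranspose_mul, mul_assoc]
        _ = W' * (g * A * gᴴ) * W'ᴴ := by rw [hVW, hVWH]; simp only [mul_one, mul_assoc]
  · rintro ⟨U, hU, hUA⟩
    have hUU : U * star U = 1 := mem_unitaryGroup_iff.mp hU
    refine ⟨V' * U * W, isUnit_det_of_right_inverse (B := V * star U * W') ?_, ?_, ?_⟩
    · calc V' * U * W * (V * star U * W') = V' * (U * (W * V) * star U) * W' := by
            simp only [mul_assoc]
        _ = 1 := by rw [hWV, mul_one, hUU, mul_one, hVW']
    · calc V' * U * W * A * (V' * U * W)ᴴ = V' * (U * (W * A * Wᴴ) * star U) * V'ᴴ := by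
            simp only [star_eq_conjTranspose, conjTranspose_mul, mul_assoc]
        _ = V' * W' * A' * (V' * W')ᴴ := by rw [hUA]; simp only [conjTranspose_mul, mul_assoc]
        _ = A' := by rw [hVW', one_mul, conjTranspose_one, mul_one]
    · calc V' * U * W * B * (V' * U * W)ᴴ = V' * (U * (W * B * Wᴴ) * star U) * V'ᴴ := by
            simp only [star_eq_conjTranspose, conjTranspose_mul, mul_assoc]
        _ = B' := by rw [hW, mul_one, hUU, mul_one, hB']

end CommRing

section RCLike
variable {n 𝕜 : Type*} [Fintype n] [RCLike 𝕜] [DecidableEq n] {A B : Matrix n n 𝕜}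

lemma charpoly_unitary_conj {U : Matrix n n 𝕜} (hU : U ∈ unitary (Matrix n n 𝕜)) :
    (U * A * star U).charpoly = A.charpoly := by
  rw [charpoly_mul_comm, ← mul_assoc, Unitary.star_mul_self_of_mem hU, one_mul]

theorem IsHermitian.charpoly_eq_iff_exists_unitary_conj (hA : A.IsHermitian)
    (hB : B.IsHermitian) :
    A.charpoly = B.charpoly ↔ ∃ U ∈ unitary (Matrix n n 𝕜), U * A * star U = B := by
  constructor
  · intro h
    let U : unitaryGroup n 𝕜 := hB.eigenvectorUnitary * star hA.eigenvectorUnitary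
    refine ⟨U, U.prop, ?_⟩
    change Unitary.conjStarAlgAut 𝕜 _ U A = B
    rw [Unitary.conjStarAlgAut_mul_apply,
      conjStarAlgAut_star_eigenvectorUnitary, (hA.eigenvalues_eq_eigenvalues_iff hB).mpr h,
      ← hB.spectral_theorem]
  · rintro ⟨U, hU, rfl⟩
    exact (charpoly_unitary_conj hU).symm

lemma PosSemidef.sqrt_eq_cfc (hA : A.PosSemidef) : hA.sqrt = cfc Real.sqrt A := by
  rw [hA.isHermitian.cfc_eq]; rfl

lemma PosSemidef.isHermitian_sqrt (hA : A.PosSemidef) : hA.sqrt.IsHermitian := by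
  rw [hA.sqrt_eq_cfc]; exact cfc_predicate _ _

lemma PosSemidef.sqrt_mul_self (hA : A.PosSemidef) : hA.sqrt * hA.sqrt = A := by
  rw [hA.sqrt_eq_cfc, ← cfc_mul Real.sqrt Real.sqrt A]
  conv_rhs => rw [← cfc_id' ℝ A hA.isHermitian]
  refine cfc_congr fun x hx => Real.mul_self_sqrt ?_
  obtain ⟨i, rfl⟩ := hA.isHermitian.spectrum_real_eq_range_eigenvalues ▸ hx
  exact hA.eigenvalues_nonneg i

lemma PosDef.sqrt_inv_mul_mul_sqrt_inv (hB : B.PosDef) :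
    hB.inv.posSemidef.sqrt * B * hB.inv.posSemidef.sqrt = 1 :=
  mul_mul_eq_one_of_mul_self_eq_inv (isUnit_iff_isUnit_det B |>.mp hB.isUnit)
    hB.inv.posSemidef.sqrt_mul_self

end RCLike

end Matrix

/-- For positive definite Hermitian matrices `A, B, A', B'` over `𝕜 = ℝ` or `ℂ`, the
characteristic polynomials of `√(B⁻¹)·A·√(B⁻¹)` and `√(B'⁻¹)·A'·√(B'⁻¹)` coincide iff
there exists an invertible `g` with `g·A·gᴴ = A'` and `g·B·gᴴ = B'`: the relative
eigenvalues form a maximal invariant for simultaneous congruence. -/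
theorem charpoly_rel_eig_maximal_invariant {𝕜 : Type*} [RCLike 𝕜] {n : ℕ}
    (A B A' B' : Matrix (Fin n) (Fin n) 𝕜)
    (hA : A.PosDef) (hB : B.PosDef) (hA' : A'.PosDef) (hB' : B'.PosDef) :
    (hB.inv.posSemidef.sqrt * A * hB.inv.posSemidef.sqrt).charpoly =
      (hB'.inv.posSemidef.sqrt * A' * hB'.inv.posSemidef.sqrt).charpoly ↔
    ∃ g : Matrix (Fin n) (Fin n) 𝕜, IsUnit g.det ∧ g * A * gᴴ = A' ∧ g * B * gᴴ = B' := by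
  set S := hB.inv.posSemidef.sqrt
  set S' := hB'.inv.posSemidef.sqrt
  have hS : Sᴴ = S := hB.inv.posSemidef.isHermitian_sqrt
  have hS' : S'ᴴ = S' := hB'.inv.posSemidef.isHermitian_sqrt
  have hSB : S * B * Sᴴ = 1 := by rw [hS]; exact hB.sqrt_inv_mul_mul_sqrt_inv
  have hSB' : S' * B' * S'ᴴ = 1 := by rw [hS']; exact hB'.sqrt_inv_mul_mul_sqrt_inv
  have hM : (S * A * S).IsHermitian := by
    simpa only [hS] using Matrix.isHermitian_mul_mul_conjTranspose S hA.isHermitian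
  have hM' : (S' * A' * S').IsHermitian := by
    simpa only [hS'] using Matrix.isHermitian_mul_mul_conjTranspose S' hA'.isHermitian
  rw [Matrix.exists_congr_iff_exists_unitary_conj hSB hSB', hS, hS']
  exact hM.charpoly_eq_iff_exists_unitary_conj hM'
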